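/- Let f : ℝⁿ → ℝ and c : ℝⁿ → ℝᵐ be continuously differentiable, x ∈ ℝⁿ, τ > 0 and σ > 0. Define ξ(x; σ, τ) := f(x) + τ‖c(x)‖₂ − inf over s ∈ ℝⁿ of [f(x) + ∇f(x)ᵀs + τ‖c(x) + J(x)s‖₂ + (σ/2)‖s‖₂²], and ξ_TR(x, τ) := f(x) + τ‖c(x)‖₂ − min over s with ‖s‖₂ ≤ 1 of [f(x) + ∇f(x)ᵀs + τ‖c(x) + J(x)s‖₂]. Then ξ(x; σ, τ) ≥ (1/2)·min(1, σ⁻¹ ξ_TR(x, τ))·ξ_TR(x, τ). -/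

import Mathlib

open scoped RealInnerProductSpace

/-- Regularized stationarity measure
`ξ(x; σ, τ) = f(x) + τ‖c(x)‖₂ − inf_{s} [f(x) + ∇f(x)ᵀs + τ‖c(x) + J(x)s‖₂ + (σ/2)‖s‖₂²]`. -/
noncomputable def xi {n m : ℕ}
    (f : EuclideanSpace ℝ (Fin n) → ℝ)
    (c : EuclideanSpace ℝ (Fin n) → EuclideanSpace ℝ (Fin m))
    (x : EuclideanSpace ℝ (Fin n)) (σ τ : ℝ) : ℝ :=
  f x + τ * ‖c x‖ -
    ⨅ s : EuclideanSpace ℝ (Fin n),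
      (f x + (inner ℝ (gradient f x) s : ℝ) + τ * ‖c x + fderiv ℝ c x s‖ + σ / 2 * ‖s‖ ^ 2)

/-- Trust-region stationarity measure
`ξ_TR(x, τ) = f(x) + τ‖c(x)‖₂ − min_{‖s‖₂ ≤ 1} [f(x) + ∇f(x)ᵀs + τ‖c(x) + J(x)s‖₂]`. -/
noncomputable def xiTR {n m : ℕ}
    (f : EuclideanSpace ℝ (Fin n) → ℝ)
    (c : EuclideanSpace ℝ (Fin n) → EuclideanSpace ℝ (Fin m))
    (x : EuclideanSpace ℝ (Fin n)) (τ : ℝ) : ℝ :=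
  f x + τ * ‖c x‖ -
    sInf ((fun s => f x + (inner ℝ (gradient f x) s : ℝ) + τ * ‖c x + fderiv ℝ c x s‖) ''
      {s : EuclideanSpace ℝ (Fin n) | ‖s‖ ≤ 1})

/-! Write `φ(s) = f x + ⟪∇f x, s⟫ + τ‖c x + J s‖` for the (convex) linearized penalty model and let
`s₀` minimize it over the unit ball, so that `ξ_TR = φ 0 - φ s₀`. Along the segment `α • s₀`,
`α ∈ [0, 1]`, convexity gives a decrease of at least `α ξ_TR`, while the regularization costs at
most `σ α² / 2`; the choice `α = min 1 (σ⁻¹ ξ_TR)` yields the bound. -/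

open Set

section Regularization

variable {E : Type*} [NormedAddCommGroup E] [NormedSpace ℝ E]

lemma half_min_mul_le_min_mul_sub_sq {σ : ℝ} (hσ : 0 < σ) (M : ℝ) :
    1 / 2 * min 1 (σ⁻¹ * M) * M ≤
      min 1 (σ⁻¹ * M) * M - σ / 2 * min 1 (σ⁻¹ * M) ^ 2 := by
  rcases le_total (σ⁻¹ * M) 1 with h | h
  · rw [min_eq_right h]
    apply le_of_eq
    field_simp
    ring
  · have hσM : σ ≤ M := by rwa [inv_mul_eq_div, one_le_div hσ] at h
    rw [min_eq_left h]
    linarith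

theorem half_min_mul_le_sub_iInf_add_sq {φ : E → ℝ} (hφ : ConvexOn ℝ univ φ) {s₀ : E}
    (hs₀ : ‖s₀‖ ≤ 1) (hdec : φ s₀ ≤ φ 0) {σ : ℝ} (hσ : 0 < σ)
    (hbdd : BddBelow (range fun s => φ s + σ / 2 * ‖s‖ ^ 2)) :
    1 / 2 * min 1 (σ⁻¹ * (φ 0 - φ s₀)) * (φ 0 - φ s₀) ≤
      φ 0 - ⨅ s, (φ s + σ / 2 * ‖s‖ ^ 2) := by
  set M := φ 0 - φ s₀
  set α := min 1 (σ⁻¹ * M)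
  have hα₀ : 0 ≤ α := le_min zero_le_one (mul_nonneg (inv_nonneg.2 hσ.le) (sub_nonneg.2 hdec))
  have hα₁ : α ≤ 1 := min_le_left _ _
  have hconv : φ (α • s₀) ≤ (1 - α) * φ 0 + α * φ s₀ := by
    simpa using hφ.2 (mem_univ 0) (mem_univ s₀) (sub_nonneg.2 hα₁) hα₀ (by ring)
  have hsq : ‖α • s₀‖ ^ 2 ≤ α ^ 2 := by
    rw [norm_smul, Real.norm_of_nonneg hα₀, mul_pow]
    exact mul_le_of_le_one_right (sq_nonneg α) (pow_le_one₀ (norm_nonneg s₀) hs₀)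
  have hinf := ciInf_le hbdd (α • s₀)
  calc 1 / 2 * α * M ≤ α * M - σ / 2 * α ^ 2 := half_min_mul_le_min_mul_sub_sq hσ M
    _ ≤ φ 0 - (φ (α • s₀) + σ / 2 * ‖α • s₀‖ ^ 2) := by nlinarith
    _ ≤ φ 0 - ⨅ s, (φ s + σ / 2 * ‖s‖ ^ 2) := by linarith

end Regularization

section PenaltyModel

variable {E F : Type*} [NormedAddCommGroup E] [InnerProductSpace ℝ E]
  [NormedAddCommGroup F] [NormedSpace ℝ F]

lemma convexOn_const_add_inner_add_mul_norm (a : ℝ) (g : E) {τ : ℝ} (hτ : 0 ≤ τ) (C : F)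
    (J : E →L[ℝ] F) : ConvexOn ℝ univ fun s => a + ⟪g, s⟫ + τ * ‖C + J s‖ := by
  have hlin : ConvexOn ℝ univ fun s => a + ⟪g, s⟫ :=
    ((innerₛₗ ℝ g).convexOn convex_univ).add_const a |>.congr fun s _ => by simp [add_comm]
  have hpen : ConvexOn ℝ univ fun s => τ * ‖C + J s‖ := by
    simpa [Function.comp_def] using
      (((convexOn_norm convex_univ).translate_right C).comp_linearMap (J : E →ₗ[ℝ] F)).smul hτ
  exact hlin.add hpen

lemma bddBelow_range_inner_add_mul_norm_add_sq (a : ℝ) (g : E) {τ : ℝ} (hτ : 0 ≤ τ) (C : F)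
    (J : E →L[ℝ] F) {σ : ℝ} (hσ : 0 < σ) :
    BddBelow (range fun s => a + ⟪g, s⟫ + τ * ‖C + J s‖ + σ / 2 * ‖s‖ ^ 2) := by
  refine ⟨a - ‖g‖ ^ 2 / (2 * σ), ?_⟩
  rintro _ ⟨s, rfl⟩
  have hinner : -(‖g‖ * ‖s‖) ≤ ⟪g, s⟫ := neg_le_of_abs_le (abs_real_inner_le_norm g s)
  have hpen : 0 ≤ τ * ‖C + J s‖ := by positivity
  have hquad : ‖g‖ * ‖s‖ - σ / 2 * ‖s‖ ^ 2 ≤ ‖g‖ ^ 2 / (2 * σ) := by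
    rw [le_div_iff₀ (by positivity)]
    nlinarith [sq_nonneg (σ * ‖s‖ - ‖g‖)]
  simp only
  linarith

end PenaltyModel

theorem stmt_4 {n m : ℕ}
    (f : EuclideanSpace ℝ (Fin n) → ℝ)
    (c : EuclideanSpace ℝ (Fin n) → EuclideanSpace ℝ (Fin m))
    (x : EuclideanSpace ℝ (Fin n)) (τ σ : ℝ) (hτ : 0 < τ) (hσ : 0 < σ) :
    xi f c x σ τ ≥ 1 / 2 * min 1 (σ⁻¹ * xiTR f c x τ) * xiTR f c x τ := by
  set φ := fun s => f x + ⟪gradient f x, s⟫ + τ * ‖c x + fderiv ℝ c x s‖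
  have hφ0 : φ 0 = f x + τ * ‖c x‖ := by simp [φ]
  have hball : IsCompact {s : EuclideanSpace ℝ (Fin n) | ‖s‖ ≤ 1} := by
    simpa only [Metric.closedBall, dist_zero_right] using
      isCompact_closedBall (0 : EuclideanSpace ℝ (Fin n)) 1
  obtain ⟨_, hleast⟩ :=
    (hball.image (by fun_prop : Continuous φ)).exists_isLeast ⟨φ 0, 0, by simp, rfl⟩
  obtain ⟨s₀, hs₀, rfl⟩ := hleast.1
  have hTR : xiTR f c x τ = φ 0 - φ s₀ := by rw [xiTR, hleast.csInf_eq, hφ0]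
  have hxi : xi f c x σ τ = φ 0 - ⨅ s, (φ s + σ / 2 * ‖s‖ ^ 2) := by rw [xi, hφ0]
  rw [hxi, hTR]
  exact half_min_mul_le_sub_iInf_add_sq
    (convexOn_const_add_inner_add_mul_norm _ _ hτ.le _ _) hs₀ (hleast.2 ⟨0, by simp, rfl⟩) hσ
    (bddBelow_range_inner_add_mul_norm_add_sq _ _ hτ.le _ _ hσ)
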